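/- arXiv:math/9902062 — 5 statements merged into one kernel-verified Lean document; each statement's English description precedes it below -/
import Mathlib

section
/- Let n, m, p, q be positive integers with p > q. Define F : ℝⁿ × ℝᵐ × ℝ → ℝ by F(x,y,z) = ‖x‖^(2p) − ‖y‖^(2q)·z^(2(p−q)). Then the set of nonzero points (x,y,z) ∈ ℝⁿ × ℝᵐ × ℝ satisfying F(x,y,z) = 0 at which the Fréchet derivative of F vanishes is exactly {(0,0,z) : z ∈ ℝ, z ≠ 0} ∪ {(0,y,0) : y ∈ ℝᵐ, y ≠ 0}. (This identifies the singular set of the real projective variety V = {[x,y,z] : F(x,y,z) = 0} ⊂ ℝP^(n+m) as the isolated point [0,0,1] together with the stratum {[0,y,0]} ≅ ℝP^(m−1).) -/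
open RealInnerProductSpace

lemma aux_inner_self_deriv_zero {E : Type*} [NormedAddCommGroup E] [InnerProductSpace ℝ E] :
    HasFDerivAt (fun x : E => ⟪x, x⟫) (0 : E →L[ℝ] ℝ) 0 := by
  have h := (hasFDerivAt_id (0:E)).inner ℝ (hasFDerivAt_id (0:E))
  refine h.congr_fderiv ?_
  ext v
  simp [fderivInnerCLM_apply]

/-- Singular set of the affine cone of `V = {|x|^{2p} = |y|^{2q} z^{2(p-q)}} ⊂ ℝP^{n+m}`:
the nonzero points of the cone where the differential of the defining polynomial vanishes
are exactly the cone over `[0,0,1]` together with the cone over `{[0,y,0]} ≅ ℝP^{m-1}`. -/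
theorem singular_set_of_V
    (n m p q : ℕ) (hn : 0 < n) (hm : 0 < m) (hq : 0 < q) (hpq : q < p)
    (F : EuclideanSpace ℝ (Fin n) × EuclideanSpace ℝ (Fin m) × ℝ → ℝ)
    (hF : ∀ (x : EuclideanSpace ℝ (Fin n)) (y : EuclideanSpace ℝ (Fin m)) (z : ℝ),
      F (x, y, z) = ‖x‖ ^ (2 * p) - ‖y‖ ^ (2 * q) * z ^ (2 * (p - q))) :
    {w : EuclideanSpace ℝ (Fin n) × EuclideanSpace ℝ (Fin m) × ℝ |
        w ≠ 0 ∧ F w = 0 ∧ fderiv ℝ F w = 0} =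
      {w : EuclideanSpace ℝ (Fin n) × EuclideanSpace ℝ (Fin m) × ℝ |
          w.1 = 0 ∧ w.2.1 = 0 ∧ w.2.2 ≠ 0} ∪
        {w : EuclideanSpace ℝ (Fin n) × EuclideanSpace ℝ (Fin m) × ℝ |
          w.1 = 0 ∧ w.2.2 = 0 ∧ w.2.1 ≠ 0} := by
  classical
  let En := EuclideanSpace ℝ (Fin n)
  let Em := EuclideanSpace ℝ (Fin m)
  let G : En × Em × ℝ → ℝ :=
    fun w => ⟪w.1, w.1⟫ ^ p - ⟪w.2.1, w.2.1⟫ ^ q * w.2.2 ^ (2 * (p - q))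
  have hFG : F = G := by
    funext w
    obtain ⟨x, y, z⟩ := w
    show F (x, y, z) = _
    rw [hF]
    show _ = ⟪x, x⟫ ^ p - ⟪y, y⟫ ^ q * z ^ (2 * (p - q))
    rw [real_inner_self_eq_norm_sq, real_inner_self_eq_norm_sq, ← pow_mul, ← pow_mul]
  have hGdiff : Differentiable ℝ G :=
    ((differentiable_fst.inner ℝ differentiable_fst).pow p).sub
      (((differentiable_snd.fst.inner ℝ differentiable_snd.fst).pow q).mul
        (differentiable_snd.snd.pow _))
  have key : ∀ w0 : En × Em × ℝ, w0.1 = 0 → (w0.2.1 = 0 ∨ w0.2.2 = 0) →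
      HasFDerivAt G (0 : (En × Em × ℝ) →L[ℝ] ℝ) w0 := by
    intro w0 h1 h2
    have hx1 : HasFDerivAt (fun w : En × Em × ℝ => ⟪w.1, w.1⟫) (0 : (En × Em × ℝ) →L[ℝ] ℝ) w0 := by
      have h0 : HasFDerivAt (fun x : En => ⟪x, x⟫) (0 : En →L[ℝ] ℝ) (w0.1) := by
        rw [h1]; exact aux_inner_self_deriv_zero
      have := h0.comp w0 hasFDerivAt_fst
      simpa [Function.comp_def] using this
    have hA : HasFDerivAt (fun w : En × Em × ℝ => ⟪w.1, w.1⟫ ^ p) (0 : (En × Em × ℝ) →L[ℝ] ℝ) w0 := by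
      have := (hasDerivAt_pow p (⟪w0.1, w0.1⟫)).comp_hasFDerivAt w0 hx1
      simpa [Function.comp_def] using this
    have hy : HasFDerivAt (fun w : En × Em × ℝ => ⟪w.2.1, w.2.1⟫ ^ q)
        ((fderiv ℝ (fun w : En × Em × ℝ => ⟪w.2.1, w.2.1⟫ ^ q) w0)) w0 :=
      (((differentiable_snd.fst.inner ℝ differentiable_snd.fst).pow q) w0).hasFDerivAt
    have hz : HasFDerivAt (fun w : En × Em × ℝ => w.2.2 ^ (2 * (p - q)))
        ((fderiv ℝ (fun w : En × Em × ℝ => w.2.2 ^ (2 * (p - q))) w0)) w0 :=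
      ((differentiable_snd.snd.pow _) w0).hasFDerivAt
    have hB : HasFDerivAt
        (fun w : En × Em × ℝ => ⟪w.2.1, w.2.1⟫ ^ q * w.2.2 ^ (2 * (p - q))) (0 : (En × Em × ℝ) →L[ℝ] ℝ) w0 := by
      rcases h2 with h2 | h2
      · have hy1 : HasFDerivAt (fun w : En × Em × ℝ => ⟪w.2.1, w.2.1⟫) (0 : (En × Em × ℝ) →L[ℝ] ℝ) w0 := by
          have h0 : HasFDerivAt (fun y : Em => ⟪y, y⟫) (0 : Em →L[ℝ] ℝ) (w0.2.1) := by
            rw [h2]; exact aux_inner_self_deriv_zero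
          have := h0.comp w0 (hasFDerivAt_snd.fst)
          simpa [Function.comp_def] using this
        have hyq : HasFDerivAt (fun w : En × Em × ℝ => ⟪w.2.1, w.2.1⟫ ^ q) (0 : (En × Em × ℝ) →L[ℝ] ℝ) w0 := by
          have := (hasDerivAt_pow q (⟪w0.2.1, w0.2.1⟫)).comp_hasFDerivAt w0 hy1
          simpa [Function.comp_def] using this
        have hmul := hyq.mul hz
        have hv : (⟪w0.2.1, w0.2.1⟫ : ℝ) ^ q = 0 := by
          rw [h2]; simp [zero_pow hq.ne']
        simp only [hv, zero_smul, smul_zero, add_zero] at hmul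
        exact hmul
      · have hz2 : HasFDerivAt (fun w : En × Em × ℝ => w.2.2)
            ((ContinuousLinearMap.snd ℝ Em ℝ).comp (ContinuousLinearMap.snd ℝ En (Em × ℝ)))
            w0 := hasFDerivAt_snd.snd
        have hzq : HasFDerivAt (fun w : En × Em × ℝ => w.2.2 ^ (2 * (p - q))) (0 : (En × Em × ℝ) →L[ℝ] ℝ) w0 := by
          have := (hasDerivAt_pow (2 * (p - q)) (w0.2.2)).comp_hasFDerivAt w0 hz2
          have h' : 2 * (p - q) - 1 ≠ 0 := by omega
          simpa [Function.comp_def, h2, zero_pow h'] using this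
        have hmul := hy.mul hzq
        have hv : w0.2.2 ^ (2 * (p - q)) = 0 := by
          rw [h2]
          have h' : 2 * (p - q) ≠ 0 := by omega
          simp [zero_pow h']
        simp only [hv, zero_smul, smul_zero, add_zero] at hmul
        exact hmul
    have := HasFDerivAt.sub (𝕜 := ℝ) (E := En × Em × ℝ) (F := ℝ) hA hB
    simp only [sub_zero] at this
    exact this
  ext w
  simp only [Set.mem_setOf_eq, Set.mem_union]
  constructor
  · rintro ⟨hw0, hFw, hdF⟩
    have hdiffF : DifferentiableAt ℝ F w := by rw [hFG]; exact hGdiff w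
    have hFd : HasFDerivAt F (0 : (En × Em × ℝ) →L[ℝ] ℝ) w := hdF ▸ hdiffF.hasFDerivAt
    -- directional derivative along (w.1, 0, 0)
    have hψ : HasDerivAt (fun t : ℝ => (((1 + t) • w.1 : En), (w.2.1, w.2.2)))
        ((w.1, (0, 0)) : En × Em × ℝ) 0 := by
      have h1 : HasDerivAt (fun t : ℝ => ((1 + t) • w.1 : En)) w.1 0 := by
        have := (((hasDerivAt_id (0:ℝ)).const_add 1).smul_const w.1)
        simpa using this
      exact h1.prodMk (hasDerivAt_const 0 (w.2.1, w.2.2))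
    have hφ0 : HasDerivAt (fun t : ℝ => F (((1 + t) • w.1 : En), (w.2.1, w.2.2))) 0 0 := by
      have := hFd.comp_hasDerivAt_of_eq 0 hψ (by simp)
      simpa [Function.comp_def] using this
    have hφ1 : HasDerivAt (fun t : ℝ => F (((1 + t) • w.1 : En), (w.2.1, w.2.2)))
        ((2 * (p:ℝ)) * ‖w.1‖ ^ (2 * p)) 0 := by
      have hfe : (fun t : ℝ => F (((1 + t) • w.1 : En), (w.2.1, w.2.2))) =
          fun t : ℝ => (1 + t) ^ (2 * p) * ‖w.1‖ ^ (2 * p)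
            - ‖w.2.1‖ ^ (2 * q) * w.2.2 ^ (2 * (p - q)) := by
        funext t
        rw [hF]
        rw [norm_smul, Real.norm_eq_abs, mul_pow, Even.pow_abs (even_two_mul p)]
      rw [hfe]
      have h1 := ((((hasDerivAt_id (0:ℝ)).const_add 1).pow (2 * p)).mul_const
        (‖w.1‖ ^ (2 * p))).sub_const (‖w.2.1‖ ^ (2 * q) * w.2.2 ^ (2 * (p - q)))
      refine h1.congr_deriv ?_
      push_cast
      norm_num
    have hx0 : w.1 = 0 := by
      have heq := hφ0.unique hφ1
      have h2p : (2 * p : ℕ) ≠ 0 := by omega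
      have ha : ‖w.1‖ ^ (2 * p) = 0 := by
        rcases mul_eq_zero.mp heq.symm with h | h
        · exfalso
          have hp' : (0:ℝ) < (p:ℝ) := by exact_mod_cast hq.trans hpq
          linarith
        · exact h
      have := pow_eq_zero_iff h2p |>.mp ha
      simpa using this
    -- now use F w = 0
    have hFw' : ‖w.2.1‖ ^ (2 * q) * w.2.2 ^ (2 * (p - q)) = 0 := by
      have := hFw
      rw [show w = (w.1, w.2.1, w.2.2) from rfl, hF, hx0] at this
      have h2p : (2 * p : ℕ) ≠ 0 := by omega
      simpa [zero_pow h2p] using this.symm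
    have h2q : (2 * q : ℕ) ≠ 0 := by omega
    have h2pq : (2 * (p - q) : ℕ) ≠ 0 := by omega
    rcases mul_eq_zero.mp hFw' with h | h
    · have hy0 : w.2.1 = 0 := by
        have := pow_eq_zero_iff h2q |>.mp h
        simpa using this
      have hz0 : w.2.2 ≠ 0 := by
        intro hz
        apply hw0
        rw [Prod.ext_iff, Prod.ext_iff]
        exact ⟨hx0, hy0, hz⟩
      exact Or.inl ⟨hx0, hy0, hz0⟩
    · have hz0 : w.2.2 = 0 := pow_eq_zero_iff h2pq |>.mp h
      by_cases hy0 : w.2.1 = 0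
      · exact absurd (by rw [Prod.ext_iff, Prod.ext_iff]; exact ⟨hx0, hy0, hz0⟩) hw0
      · exact Or.inr ⟨hx0, hz0, hy0⟩
  · rintro (⟨h1, h2, h3⟩ | ⟨h1, h2, h3⟩)
    · refine ⟨?_, ?_, ?_⟩
      · intro h; rw [Prod.ext_iff, Prod.ext_iff] at h
        exact h3 h.2.2
      · rw [show w = (w.1, w.2.1, w.2.2) from rfl, hF, h1, h2]
        have h2p : 2 * p ≠ 0 := by omega
        have h2q : 2 * q ≠ 0 := by omega
        simp [zero_pow h2p, zero_pow h2q]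
      · rw [hFG]
        exact (key w h1 (Or.inl h2)).fderiv
    · refine ⟨?_, ?_, ?_⟩
      · intro h; rw [Prod.ext_iff, Prod.ext_iff] at h
        exact h3 h.2.1
      · rw [show w = (w.1, w.2.1, w.2.2) from rfl, hF, h1, h2]
        have h2p : 2 * p ≠ 0 := by omega
        have h2pq : 2 * (p - q) ≠ 0 := by omega
        simp [zero_pow h2p, zero_pow h2pq]
      · rw [hFG]
        exact (key w h1 (Or.inr h2)).fderiv
end

section
/- Let n, m, p, q be positive integers with p > q. Define G : ℝⁿ × ℝᵐ × ℝ → ℝ by G(x,y,z) = ‖x‖^(2p) − ‖y‖^(2q)·z^(2(p−q)) − ‖y‖^(2p). Then the set of nonzero points (x,y,z) ∈ ℝⁿ × ℝᵐ × ℝ satisfying G(x,y,z) = 0 at which the Fréchet derivative of G vanishes is exactly {(0,0,z) : z ∈ ℝ, z ≠ 0}. (This identifies the singular set of the real projective variety W = {[x,y,z] : G(x,y,z) = 0} ⊂ ℝP^(n+m) as the single point [0,0,1].) -/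
set_option synthInstance.maxHeartbeats 1000000
set_option maxHeartbeats 1000000

private lemma hasFDerivAt_pow_zero {X : Type*} [NormedAddCommGroup X] [NormedSpace ℝ X]
    {f : X → ℝ} {x : X} (hf : HasFDerivAt f (0 : X →L[ℝ] ℝ) x) (k : ℕ) :
    HasFDerivAt (fun w => f w ^ k) (0 : X →L[ℝ] ℝ) x := by
  induction k with
  | zero => simpa using hasFDerivAt_const (1:ℝ) x
  | succ k ih => simpa [pow_succ, Pi.mul_def] using ih.mul hf


/-- Singular set of the affine cone of `W = {|x|^{2p} = |y|^{2q} z^{2(p-q)} + |y|^{2p}} ⊂ ℝP^{n+m}`: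
the nonzero points of the cone at which the differential of the defining polynomial vanishes
are exactly the cone over the single point `[0,0,1]`. -/
theorem singular_set_of_W
    (n m p q : ℕ) (hn : 0 < n) (hm : 0 < m) (hq : 0 < q) (hpq : q < p)
    (G : EuclideanSpace ℝ (Fin n) × EuclideanSpace ℝ (Fin m) × ℝ → ℝ)
    (hG : ∀ (x : EuclideanSpace ℝ (Fin n)) (y : EuclideanSpace ℝ (Fin m)) (z : ℝ),
      G (x, y, z) = ‖x‖ ^ (2 * p) - ‖y‖ ^ (2 * q) * z ^ (2 * (p - q)) - ‖y‖ ^ (2 * p)) :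
    {w : EuclideanSpace ℝ (Fin n) × EuclideanSpace ℝ (Fin m) × ℝ |
        w ≠ 0 ∧ G w = 0 ∧ fderiv ℝ G w = 0} =
      {w : EuclideanSpace ℝ (Fin n) × EuclideanSpace ℝ (Fin m) × ℝ |
        w.1 = 0 ∧ w.2.1 = 0 ∧ w.2.2 ≠ 0} := by
  have hp' : 0 < p := hq.trans hpq
  have hG' : G = fun w : EuclideanSpace ℝ (Fin n) × EuclideanSpace ℝ (Fin m) × ℝ =>
      (‖w.1‖ ^ 2) ^ p - (‖w.2.1‖ ^ 2) ^ q * w.2.2 ^ (2 * (p - q)) - (‖w.2.1‖ ^ 2) ^ p := by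
    funext w
    rw [show w = (w.1, w.2.1, w.2.2) from rfl, hG]
    simp only [pow_mul]
  have hdiff : Differentiable ℝ G := by
    rw [hG']
    exact (((differentiable_fst.norm_sq ℝ).pow p).sub
      (((differentiable_snd.fst.norm_sq ℝ).pow q).mul (differentiable_snd.snd.pow _))).sub
      ((differentiable_snd.fst.norm_sq ℝ).pow p)
  ext ⟨x, y, z⟩
  simp only [Set.mem_setOf_eq]
  constructor
  · rintro ⟨hne, hG0, hd⟩
    have key : ∀ v : EuclideanSpace ℝ (Fin n) × EuclideanSpace ℝ (Fin m) × ℝ,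
        HasDerivAt (fun t : ℝ => G ((x, y, z) + t • v)) 0 0 := by
      intro v
      have hc : HasDerivAt (fun t : ℝ => (x, y, z) + t • v) v 0 := by
        simpa using ((hasDerivAt_id (0:ℝ)).smul_const v).const_add (x, y, z)
      have hF : HasFDerivAt G (0 : _ →L[ℝ] ℝ) ((fun t : ℝ => (x, y, z) + t • v) 0) := by
        simpa [hd] using (hdiff (x, y, z)).hasFDerivAt
      simpa [Function.comp_def] using hF.comp_hasDerivAt 0 hc
    have hpr : (0:ℝ) < p := by exact_mod_cast hp'
    have hqr : (0:ℝ) < q := by exact_mod_cast hq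
    have hx : x = 0 := by
      have h1 := ((((hasDerivAt_id (0:ℝ)).const_add 1).pow 2).mul_const (‖x‖^2)).pow p
        |>.sub_const ((‖y‖^2)^q * z^(2*(p-q))) |>.sub_const ((‖y‖^2)^p)
      have heq : (fun t : ℝ => G ((x, y, z) + t • (x, 0, 0))) =
          (fun t : ℝ => ((1+t)^2 * ‖x‖^2)^p - (‖y‖^2)^q * z^(2*(p-q)) - (‖y‖^2)^p) := by
        funext t
        have hpt : ((x, y, z) : EuclideanSpace ℝ (Fin n) × EuclideanSpace ℝ (Fin m) × ℝ)
            + t • (x, 0, 0) = ((1+t) • x, y, z) := by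
          simp [Prod.ext_iff, add_smul]
        rw [hpt, hG']
        simp [norm_smul, mul_pow, sq_abs]
      have h0 := h1.unique (heq ▸ key (x, 0, 0))
      norm_num at h0
      rcases h0 with (h | ⟨h, -⟩) | h
      · exact absurd h hp'.ne'
      · exact h
      · exact h
    have hy : y = 0 := by
      have h3 := (((hasDerivAt_id (0:ℝ)).const_add 1).pow 2).mul_const (‖y‖^2)
      have h1 := (hasDerivAt_const (0:ℝ) ((‖x‖^2)^p)).sub ((h3.pow q).mul_const (z^(2*(p-q))))
        |>.sub (h3.pow p)
      have heq : (fun t : ℝ => G ((x, y, z) + t • (0, y, 0))) =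
          (fun t : ℝ => (‖x‖^2)^p - ((1+t)^2 * ‖y‖^2)^q * z^(2*(p-q)) - ((1+t)^2 * ‖y‖^2)^p) := by
        funext t
        have hpt : ((x, y, z) : EuclideanSpace ℝ (Fin n) × EuclideanSpace ℝ (Fin m) × ℝ)
            + t • (0, y, 0) = (x, (1+t) • y, z) := by
          simp [Prod.ext_iff, add_smul]
        rw [hpt, hG']
        simp [norm_smul, mul_pow, sq_abs]
      have h0 := h1.unique (heq ▸ key (0, y, 0))
      norm_num at h0
      by_contra hy0
      have hny : 0 < ‖y‖ := norm_pos_iff.mpr hy0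
      have e1 : 0 < ‖y‖^2 := pow_pos hny 2
      have hze : (0:ℝ) ≤ z^(2*(p-q)) := by
        rw [pow_mul]; exact pow_nonneg (sq_nonneg z) _
      nlinarith [mul_pos (mul_pos hpr (pow_pos e1 (p-1))) e1,
        mul_nonneg (mul_nonneg (mul_nonneg hqr.le (pow_pos e1 (q-1)).le) e1.le) hze]
    refine ⟨hx, hy, ?_⟩
    intro hz
    exact hne (by simp [Prod.ext_iff, hx, hy, hz])
  · rintro ⟨hx, hy, hz⟩
    have hx' : x = 0 := hx
    have hy' : y = 0 := hy
    have hz' : z ≠ 0 := hz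
    subst hx'; subst hy'
    have h2p : 2 * p ≠ 0 := by positivity
    have h2q : 2 * q ≠ 0 := by positivity
    refine ⟨by simp [Prod.ext_iff, hz'], by rw [hG]; simp [zero_pow h2p, zero_pow h2q], ?_⟩
    have hx2 : HasFDerivAt
        (fun w : EuclideanSpace ℝ (Fin n) × EuclideanSpace ℝ (Fin m) × ℝ => ‖w.1‖ ^ 2)
        (0 : _ →L[ℝ] ℝ) (0, 0, z) := by
      have := (hasFDerivAt_fst
        (p := ((0, 0, z) : EuclideanSpace ℝ (Fin n) × EuclideanSpace ℝ (Fin m) × ℝ))).norm_sq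
      simpa using this
    have hy2 : HasFDerivAt
        (fun w : EuclideanSpace ℝ (Fin n) × EuclideanSpace ℝ (Fin m) × ℝ => ‖w.2.1‖ ^ 2)
        (0 : _ →L[ℝ] ℝ) (0, 0, z) := by
      have := ((hasFDerivAt_fst (𝕜 := ℝ)).comp
        ((0, 0, z) : EuclideanSpace ℝ (Fin n) × EuclideanSpace ℝ (Fin m) × ℝ)
        (hasFDerivAt_snd (𝕜 := ℝ))).norm_sq
      simpa using this
    have hA : HasFDerivAt
        (fun w : EuclideanSpace ℝ (Fin n) × EuclideanSpace ℝ (Fin m) × ℝ => (‖w.1‖ ^ 2) ^ p)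
        (0 : _ →L[ℝ] ℝ) (0, 0, z) := by
      exact hasFDerivAt_pow_zero hx2 p
    have hC : HasFDerivAt
        (fun w : EuclideanSpace ℝ (Fin n) × EuclideanSpace ℝ (Fin m) × ℝ => (‖w.2.1‖ ^ 2) ^ p)
        (0 : _ →L[ℝ] ℝ) (0, 0, z) := by
      exact hasFDerivAt_pow_zero hy2 p
    have hBq : HasFDerivAt
        (fun w : EuclideanSpace ℝ (Fin n) × EuclideanSpace ℝ (Fin m) × ℝ => (‖w.2.1‖ ^ 2) ^ q)
        (0 : _ →L[ℝ] ℝ) (0, 0, z) := by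
      exact hasFDerivAt_pow_zero hy2 q
    have hzz := ((((differentiable_snd.snd : Differentiable ℝ (fun w : EuclideanSpace ℝ (Fin n) × EuclideanSpace ℝ (Fin m) × ℝ => w.2.2)).pow (2 * (p - q)))
        ((0, 0, z) : EuclideanSpace ℝ (Fin n) × EuclideanSpace ℝ (Fin m) × ℝ)) :
        DifferentiableAt ℝ (fun w : EuclideanSpace ℝ (Fin n) × EuclideanSpace ℝ (Fin m) × ℝ => w.2.2 ^ (2 * (p - q))) _).hasFDerivAt
    have hB : HasFDerivAt
        (fun w : EuclideanSpace ℝ (Fin n) × EuclideanSpace ℝ (Fin m) × ℝ =>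
          (‖w.2.1‖ ^ 2) ^ q * w.2.2 ^ (2 * (p - q)))
        (0 : _ →L[ℝ] ℝ) (0, 0, z) := by
      have := hBq.mul hzz
      simpa [zero_pow hq.ne', Pi.mul_def, Pi.pow_def] using this
    have htot := (hA.sub hB).sub hC
    rw [hG']
    simpa [Pi.sub_def] using htot.fderiv
end

section
/- Let n, m be positive integers and α ≥ 1 a real number, and let φ : (0,∞) × ℝⁿ × ℝᵐ → ℝⁿ × ℝᵐ be defined by φ(r,v,w) = (r·v, r^α·w). Then for every 0 < r ≤ 1, every v ∈ ℝⁿ, w ∈ ℝᵐ with ‖v‖ = ‖w‖ = 1, and every (ṙ, v̇, ẇ) ∈ ℝ × ℝⁿ × ℝᵐ with ⟨v, v̇⟩ = 0 and ⟨w, ẇ⟩ = 0, setting Q = ṙ² + r²‖v̇‖² + r^(2α)‖ẇ‖², one has Q ≤ ‖Dφ(r,v,w)(ṙ, v̇, ẇ)‖² ≤ (1 + α²)·Q. (Hence, for bounded r, the pullback of the Euclidean metric under φ is quasi-isometric to the warped product metric g = dr² + r² g_{S^(n−1)} + r^(2α) g_{S^(m−1)}.) -/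
set_option maxHeartbeats 1000000


open scoped InnerProductSpace

/-- Quasi-isometry of the pullback metric: for `0 < r ≤ 1`, unit vectors `v, w` and tangent
vectors `(ṙ,v̇,ẇ)` with `⟨v,v̇⟩ = ⟨w,ẇ⟩ = 0`, setting `Q = ṙ² + r²‖v̇‖² + r^{2α}‖ẇ‖²`, one has
`Q ≤ ‖Dφ(r,v,w)(ṙ,v̇,ẇ)‖² ≤ (1+α²)Q`, where `φ(r,v,w) = (r·v, r^α·w)` and norms are
Euclidean. -/
theorem cone_map_quasi_isometry
    (n m : ℕ) (hn : 0 < n) (hm : 0 < m) (α : ℝ) (hα : 1 ≤ α)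
    (φ : ℝ × EuclideanSpace ℝ (Fin n) × EuclideanSpace ℝ (Fin m) →
      EuclideanSpace ℝ (Fin n) × EuclideanSpace ℝ (Fin m))
    (hφ : ∀ (r : ℝ) (v : EuclideanSpace ℝ (Fin n)) (w : EuclideanSpace ℝ (Fin m)),
      φ (r, v, w) = (r • v, (r ^ α) • w)) :
    ∀ (r : ℝ) (v : EuclideanSpace ℝ (Fin n)) (w : EuclideanSpace ℝ (Fin m)),
      0 < r → r ≤ 1 → ‖v‖ = 1 → ‖w‖ = 1 →
      ∀ (rd : ℝ) (vd : EuclideanSpace ℝ (Fin n)) (wd : EuclideanSpace ℝ (Fin m)),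
        ⟪v, vd⟫_ℝ = 0 → ⟪w, wd⟫_ℝ = 0 →
        rd ^ 2 + r ^ 2 * ‖vd‖ ^ 2 + r ^ (2 * α) * ‖wd‖ ^ 2 ≤
            ‖(fderiv ℝ φ (r, v, w) (rd, vd, wd)).1‖ ^ 2 +
              ‖(fderiv ℝ φ (r, v, w) (rd, vd, wd)).2‖ ^ 2 ∧
          ‖(fderiv ℝ φ (r, v, w) (rd, vd, wd)).1‖ ^ 2 +
              ‖(fderiv ℝ φ (r, v, w) (rd, vd, wd)).2‖ ^ 2 ≤
            (1 + α ^ 2) * (rd ^ 2 + r ^ 2 * ‖vd‖ ^ 2 + r ^ (2 * α) * ‖wd‖ ^ 2) := by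
  intro r v w hr hr1 hv hw rd vd wd hvv hww
  have hφ' : φ = fun p : ℝ × EuclideanSpace ℝ (Fin n) × EuclideanSpace ℝ (Fin m) =>
      (p.1 • p.2.1, (p.1 ^ α) • p.2.2) := by
    funext p; obtain ⟨a, b, c⟩ := p; exact hφ a b c
  have h1 : HasFDerivAt
      (fun p : ℝ × EuclideanSpace ℝ (Fin n) × EuclideanSpace ℝ (Fin m) => p.1)
      (ContinuousLinearMap.fst ℝ ℝ _) (r, v, w) := hasFDerivAt_fst
  have h2 : HasFDerivAt
      (fun p : ℝ × EuclideanSpace ℝ (Fin n) × EuclideanSpace ℝ (Fin m) => p.2.1)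
      ((ContinuousLinearMap.fst ℝ (EuclideanSpace ℝ (Fin n)) (EuclideanSpace ℝ (Fin m))).comp
        (ContinuousLinearMap.snd ℝ ℝ _)) (r, v, w) :=
    hasFDerivAt_fst.comp _ hasFDerivAt_snd
  have h3 : HasFDerivAt
      (fun p : ℝ × EuclideanSpace ℝ (Fin n) × EuclideanSpace ℝ (Fin m) => p.2.2)
      ((ContinuousLinearMap.snd ℝ (EuclideanSpace ℝ (Fin n)) (EuclideanSpace ℝ (Fin m))).comp
        (ContinuousLinearMap.snd ℝ ℝ _)) (r, v, w) :=
    hasFDerivAt_snd.comp _ hasFDerivAt_snd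
  have hc : HasFDerivAt
      (fun p : ℝ × EuclideanSpace ℝ (Fin n) × EuclideanSpace ℝ (Fin m) => p.1 ^ α)
      ((α * r ^ (α - 1)) • ContinuousLinearMap.fst ℝ ℝ _) (r, v, w) := by
    have hd : HasDerivAt (fun x : ℝ => x ^ α) (α * r ^ (α - 1)) r :=
      Real.hasDerivAt_rpow_const (Or.inl hr.ne')
    exact hd.comp_hasFDerivAt (r, v, w) h1
  have hA := h1.smul h2
  have hB := hc.smul h3
  have hL := hA.prodMk hB
  have hfd := hL.fderiv
  rw [hφ']
  erw [hfd]
  have e1 : ((((r, v, w) : ℝ × EuclideanSpace ℝ (Fin n) × EuclideanSpace ℝ (Fin m)).1 •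
      ((ContinuousLinearMap.fst ℝ (EuclideanSpace ℝ (Fin n)) (EuclideanSpace ℝ (Fin m))).comp
        (ContinuousLinearMap.snd ℝ ℝ _)) +
      (ContinuousLinearMap.fst ℝ ℝ _).smulRight (r, v, w).2.1).prod
      ((r, v, w).1 ^ α •
        ((ContinuousLinearMap.snd ℝ (EuclideanSpace ℝ (Fin n)) (EuclideanSpace ℝ (Fin m))).comp
          (ContinuousLinearMap.snd ℝ ℝ _)) +
        ((α * r ^ (α - 1)) • ContinuousLinearMap.fst ℝ ℝ _).smulRight (r, v, w).2.2))
      (rd, vd, wd) = (r • vd + rd • v, (r ^ α) • wd + ((α * r ^ (α - 1)) * rd) • w) := by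
    simp [mul_smul]
  rw [e1]
  have hvv' : ⟪vd, v⟫_ℝ = 0 := by rw [real_inner_comm]; exact hvv
  have hww' : ⟪wd, w⟫_ℝ = 0 := by rw [real_inner_comm]; exact hww
  have n1 : ‖r • vd + rd • v‖ ^ 2 = r ^ 2 * ‖vd‖ ^ 2 + rd ^ 2 := by
    rw [norm_add_sq_real, real_inner_smul_left, real_inner_smul_right, hvv', norm_smul,
      norm_smul, hv]
    simp [abs_of_pos hr, mul_pow, sq_abs]
  have n2 : ‖(r ^ α) • wd + ((α * r ^ (α - 1)) * rd) • w‖ ^ 2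
      = r ^ (2 * α) * ‖wd‖ ^ 2 + (α * r ^ (α - 1) * rd) ^ 2 := by
    rw [norm_add_sq_real, real_inner_smul_left, real_inner_smul_right, hww', norm_smul,
      norm_smul, hw]
    have : |r ^ α| ^ 2 = r ^ (2 * α) := by
      rw [abs_of_pos (Real.rpow_pos_of_pos hr α), ← Real.rpow_natCast (r ^ α) 2,
        ← Real.rpow_mul hr.le]
      norm_num [mul_comm]
    simp [mul_pow, sq_abs, this]
  rw [n1, n2]
  have hpow1 : r ^ (α - 1) ≤ 1 := Real.rpow_le_one hr.le hr1 (by linarith)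
  have hpow0 : (0:ℝ) ≤ r ^ (α - 1) := (Real.rpow_pos_of_pos hr _).le
  have h2α : (0:ℝ) ≤ r ^ (2 * α) := (Real.rpow_pos_of_pos hr _).le
  constructor
  · nlinarith [sq_nonneg (α * r ^ (α - 1) * rd), sq_nonneg rd, sq_nonneg ‖vd‖, sq_nonneg ‖wd‖]
  · nlinarith [sq_nonneg rd, sq_nonneg α, mul_nonneg (sq_nonneg ‖vd‖) (sq_nonneg α),
      mul_nonneg h2α (sq_nonneg ‖wd‖), sq_nonneg (α * rd),
      mul_le_one₀ hpow1 hpow0 hpow1]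
end

section
/- Let n, m be positive integers, k ≥ l ≥ 1 integers, and f, g : ℝ → ℝ smooth (C^∞) functions with f^(j)(0) = 0 for 0 ≤ j < k, f^(k)(0) > 0, g^(j)(0) = 0 for 0 ≤ j < l, and g^(l)(0) > 0. Then there exist open neighborhoods U and U' of (0,0) in ℝⁿ × ℝᵐ and a bijection Φ : U → U' with Φ(0,0) = (0,0), such that Φ is smooth on U, its inverse is smooth on U', and Φ maps the set {(x,y) ∈ U : ‖x‖^(2k) = ‖y‖^(2l)} exactly onto the set {(x,y) ∈ U' : f(‖x‖²) = g(‖y‖²)}. In particular, locally near the origin, the quasi-isometry class of the variety V_{f,g} = {(x,y) ∈ ℝⁿ × ℝᵐ : f(‖x‖²) = g(‖y‖²)} depends only on k and l. -/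
open Filter Set Metric
open scoped Topology

private lemma deriv_contDiff_top {f : ℝ → ℝ} (hf : ContDiff ℝ (⊤ : ℕ∞) f) : ContDiff ℝ (⊤ : ℕ∞) (deriv f) :=
  ((contDiff_succ_iff_deriv (n := (⊤ : ℕ∞))).mp (by simpa using hf)).2.2

private lemma tendsto_div_pow (k : ℕ) : ∀ (f : ℝ → ℝ), ContDiff ℝ (⊤ : ℕ∞) f →
    (∀ j < k, iteratedDeriv j f 0 = 0) →
    Tendsto (fun t => f t / t ^ k) (𝓝[≠] (0:ℝ)) (𝓝 (iteratedDeriv k f 0 / (Nat.factorial k))) := by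
  induction k with
  | zero =>
    intro f hf _
    simpa [iteratedDeriv_zero] using
      (hf.continuous.continuousAt.tendsto.mono_left (nhdsWithin_le_nhds (s := {(0:ℝ)}ᶜ)))
  | succ k ih =>
    intro f hf hvan
    have hdf : ContDiff ℝ (⊤ : ℕ∞) (deriv f) := deriv_contDiff_top hf
    have hvan' : ∀ j < k, iteratedDeriv j (deriv f) 0 = 0 := by
      intro j hj
      have := hvan (j+1) (by omega)
      rwa [iteratedDeriv_succ'] at this
    have hf0 : f 0 = 0 := by simpa [iteratedDeriv_zero] using hvan 0 (by omega)
    have key := ih (deriv f) hdf hvan'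
    have hval : iteratedDeriv k (deriv f) 0 = iteratedDeriv (k+1) f 0 := by
      rw [iteratedDeriv_succ']
    apply deriv.lhopital_zero_nhdsNE (g := fun t : ℝ => t ^ (k+1))
    · exact Eventually.of_forall fun x =>
        (hf.differentiable (by simp)) x
    · refine eventually_nhdsWithin_of_forall fun x hx => ?_
      have hx' : x ≠ 0 := hx
      simp only [deriv_pow_field]
      positivity
    · have : Tendsto f (𝓝 (0:ℝ)) (𝓝 (f 0)) := hf.continuous.continuousAt.tendsto
      rw [hf0] at this
      exact this.mono_left nhdsWithin_le_nhds
    · have : Tendsto (fun t : ℝ => t ^ (k+1)) (𝓝 0) (𝓝 ((0:ℝ) ^ (k+1))) :=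
        (continuous_pow (k+1)).continuousAt.tendsto
      rw [zero_pow (by omega)] at this
      exact this.mono_left nhdsWithin_le_nhds
    · have heq : ∀ x : ℝ, deriv f x / deriv (fun t : ℝ => t ^ (k+1)) x
          = (deriv f x / x ^ k) / ((k:ℝ)+1) := by
        intro x
        simp only [deriv_pow_field]
        push_cast
        rw [div_div, mul_comm]
      have := key.div_const ((k:ℝ)+1)
      refine Tendsto.congr (fun x => (heq x).symm) ?_
      convert this using 2
      rw [hval, div_div, Nat.factorial_succ]
      push_cast
      ring

private lemma param_hasDerivAt (φ h : ℝ → ℝ) (hφ : Continuous φ) (hh : ContDiff ℝ (⊤ : ℕ∞) h)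
    (t0 : ℝ) :
    HasDerivAt (fun t => ∫ s in (0:ℝ)..1, φ s * h (s * t))
      (∫ s in (0:ℝ)..1, (φ s * s) * deriv h (s * t0)) t0 := by
  have hdh : Continuous (deriv h) := (deriv_contDiff_top hh).continuous
  have hhc : Continuous h := hh.continuous
  have hcont : Continuous (fun p : ℝ × ℝ => (φ p.1 * p.1) * deriv h (p.1 * p.2)) := by fun_prop
  obtain ⟨C, hC⟩ := (isCompact_Icc.prod (isCompact_closedBall t0 1)).exists_bound_of_continuousOn
    hcont.continuousOn
  have key := intervalIntegral.hasDerivAt_integral_of_dominated_loc_of_deriv_le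
    (μ := MeasureTheory.volume) (a := 0) (b := 1)
    (F := fun t s => φ s * h (s * t)) (F' := fun t s => (φ s * s) * deriv h (s * t)) (x₀ := t0)
    (bound := fun _ => C)
    (ball_mem_nhds t0 one_pos)
    (Eventually.of_forall fun x => Continuous.aestronglyMeasurable (by fun_prop))
    (Continuous.intervalIntegrable (by fun_prop) _ _)
    (Continuous.aestronglyMeasurable (by fun_prop))
    (Eventually.of_forall fun s hs x hx => by
      have hs' : s ∈ Ioc (0:ℝ) 1 := by rwa [Set.uIoc_of_le zero_le_one] at hs
      exact hC (s, x) ⟨Ioc_subset_Icc_self hs', ball_subset_closedBall hx⟩)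
    intervalIntegrable_const
    (Eventually.of_forall fun s _ x _ => by
      have h1 : HasDerivAt (fun x => s * x) s x := by simpa using (hasDerivAt_id x).const_mul s
      have h2 := ((hh.differentiable (by simp)) (s * x)).hasDerivAt.comp x h1
      have h3 : HasDerivAt (fun x => φ s * h (s * x)) (φ s * (deriv h (s * x) * s)) x :=
        h2.const_mul (φ s)
      exact h3.congr_deriv (by ring))
  exact key.2

private lemma param_contDiff (n : ℕ) : ∀ (φ h : ℝ → ℝ), Continuous φ → ContDiff ℝ (⊤ : ℕ∞) h →
    ContDiff ℝ n (fun t => ∫ s in (0:ℝ)..1, φ s * h (s * t)) := by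
  induction n with
  | zero =>
    intro φ h hφ hh
    have : ContDiff ℝ 0 (fun t => ∫ s in (0:ℝ)..1, φ s * h (s * t)) :=
      contDiff_zero.mpr (continuous_iff_continuousAt.mpr fun t =>
        (param_hasDerivAt φ h hφ hh t).continuousAt)
    exact_mod_cast this
  | succ n ih =>
    intro φ h hφ hh
    have hd : deriv (fun t => ∫ s in (0:ℝ)..1, φ s * h (s * t)) =
        fun t => ∫ s in (0:ℝ)..1, (φ s * s) * deriv h (s * t) :=
      funext fun t => (param_hasDerivAt φ h hφ hh t).deriv
    have : ContDiff ℝ ((n : WithTop ℕ∞) + 1) (fun t => ∫ s in (0:ℝ)..1, φ s * h (s * t)) := by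
      rw [contDiff_succ_iff_deriv]
      refine ⟨fun t => (param_hasDerivAt φ h hφ hh t).differentiableAt, by simp, ?_⟩
      rw [hd]
      exact ih (fun s => φ s * s) (deriv h) (by fun_prop) (deriv_contDiff_top hh)
    exact_mod_cast this

private lemma divX (f : ℝ → ℝ) (hf : ContDiff ℝ (⊤ : ℕ∞) f) (h0 : f 0 = 0) :
    ∃ g : ℝ → ℝ, ContDiff ℝ (⊤ : ℕ∞) g ∧ ∀ t, f t = t * g t := by
  refine ⟨fun t => ∫ s in (0:ℝ)..1, (fun _ => (1:ℝ)) s * deriv f (s * t),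
    contDiff_infty.mpr fun n => param_contDiff n _ _ continuous_const (deriv_contDiff_top hf), ?_⟩
  intro t
  rcases eq_or_ne t 0 with rfl | ht
  · simp [h0]
  · have hdc : Continuous (deriv f) := (deriv_contDiff_top hf).continuous
    have e1 : (∫ s in (0:ℝ)..1, (fun _ => (1:ℝ)) s * deriv f (s * t)) =
        ∫ s in (0:ℝ)..1, deriv f (t * s) := by
      refine intervalIntegral.integral_congr fun s _ => ?_
      simp only [one_mul]
      rw [mul_comm]
    show f t = t * (∫ s in (0:ℝ)..1, (fun _ => (1:ℝ)) s * deriv f (s * t))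
    rw [e1, intervalIntegral.integral_comp_mul_left (hc := ht), mul_zero, mul_one,
      intervalIntegral.integral_deriv_eq_sub (fun x _ => (hf.differentiable (by simp)) x)
        (hdc.intervalIntegrable _ _), h0]
    rw [smul_eq_mul, sub_zero, ← mul_assoc, mul_inv_cancel₀ ht, one_mul]

private lemma factor_pow (k : ℕ) : ∀ f : ℝ → ℝ, ContDiff ℝ (⊤ : ℕ∞) f →
    (∀ j < k, iteratedDeriv j f 0 = 0) →
    ∃ u : ℝ → ℝ, ContDiff ℝ (⊤ : ℕ∞) u ∧ ∀ t, f t = t ^ k * u t := by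
  induction k with
  | zero => intro f hf _; exact ⟨f, hf, fun t => by simp⟩
  | succ k ih =>
    intro f hf hvan
    obtain ⟨u, hu, hfu⟩ := ih f hf (fun j hj => hvan j (by omega))
    have hB := tendsto_div_pow k f hf (fun j hj => hvan j (by omega))
    rw [hvan k (by omega), zero_div] at hB
    have hA : Tendsto (fun t => f t / t ^ k) (𝓝[≠] (0:ℝ)) (𝓝 (u 0)) := by
      refine (hu.continuous.continuousAt.tendsto.mono_left nhdsWithin_le_nhds).congr' ?_
      filter_upwards [self_mem_nhdsWithin] with t ht0
      rw [hfu t, mul_div_cancel_left₀ _ (pow_ne_zero _ ht0)]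
    have hu0 : u 0 = 0 := tendsto_nhds_unique hA hB
    obtain ⟨v, hv, huv⟩ := divX u hu hu0
    exact ⟨v, hv, fun t => by rw [hfu t, huv t]; ring⟩

private lemma hadamard (k : ℕ) (f : ℝ → ℝ) (hf : ContDiff ℝ (⊤ : ℕ∞) f)
    (hvan : ∀ j < k, iteratedDeriv j f 0 = 0) (hpos : 0 < iteratedDeriv k f 0) :
    ∃ u : ℝ → ℝ, ContDiff ℝ (⊤ : ℕ∞) u ∧ 0 < u 0 ∧ ∀ᶠ t in 𝓝 (0:ℝ), f t = t ^ k * u t := by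
  obtain ⟨u, hu, hfu⟩ := factor_pow k f hf hvan
  have hB := tendsto_div_pow k f hf hvan
  have hA : Tendsto (fun t => f t / t ^ k) (𝓝[≠] (0:ℝ)) (𝓝 (u 0)) := by
    refine (hu.continuous.continuousAt.tendsto.mono_left nhdsWithin_le_nhds).congr' ?_
    filter_upwards [self_mem_nhdsWithin] with t ht0
    rw [hfu t, mul_div_cancel_left₀ _ (pow_ne_zero _ ht0)]
  have hu0 := tendsto_nhds_unique hA hB
  exact ⟨u, hu, by rw [hu0]; exact div_pos hpos (by positivity), Eventually.of_forall hfu⟩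


private lemma mem_ball_zero_real {r t : ℝ} (h : |t| < r) : t ∈ ball (0:ℝ) r := by
  simpa [mem_ball, Real.dist_eq] using h

private lemma oneDim (k : ℕ) (hk : 1 ≤ k) (f : ℝ → ℝ) (hf : ContDiff ℝ (⊤ : ℕ∞) f)
    (hvan : ∀ j < k, iteratedDeriv j f 0 = 0) (hpos : 0 < iteratedDeriv k f 0) :
    ∃ (c τ : ℝ → ℝ) (ρ δ : ℝ), 0 < δ ∧ δ ≤ ρ ∧
      (∀ t, |t| < ρ → ContDiffAt ℝ (⊤ : ℕ∞) c t) ∧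
      (∀ t, |t| < ρ → 0 < c t) ∧
      (∀ t, |t| < ρ → f t = t ^ k * c t ^ (2 * k)) ∧
      (∀ s, |s| < δ → ContDiffAt ℝ (⊤ : ℕ∞) τ s) ∧
      τ 0 = 0 ∧
      (∀ s, |s| < δ → |τ s| < ρ) ∧
      (∀ s, |s| < δ → τ s * c (τ s) ^ 2 = s) ∧
      (∀ t, |t| < δ → τ (t * c t ^ 2) = t) := by
  obtain ⟨u, hu, hu0, hev⟩ := hadamard k f hf hvan hpos
  -- radius ρ where u is analytic, positive, and f = t^k u
  have hS : ∀ᶠ t in 𝓝 (0:ℝ), ContDiffAt ℝ (⊤ : ℕ∞) u t ∧ 0 < u t ∧ f t = t ^ k * u t := by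
    filter_upwards [Eventually.of_forall (fun t => hu.contDiffAt (x := t)),
      hu.continuous.continuousAt.eventually_mem (isOpen_Ioi.mem_nhds hu0), hev] with t h1 h2 h3
    exact ⟨h1, h2, h3⟩
  obtain ⟨ρ, hρpos, hρsub⟩ := Metric.eventually_nhds_iff.mp hS
  have hρ : ∀ t, |t| < ρ → ContDiffAt ℝ (⊤ : ℕ∞) u t ∧ 0 < u t ∧ f t = t ^ k * u t :=
    fun t ht => hρsub (by simpa [Real.dist_eq] using ht)
  -- the function c
  set c : ℝ → ℝ := fun t => u t ^ ((2 * k : ℝ))⁻¹ with hcdef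
  have hc_cd : ∀ t, |t| < ρ → ContDiffAt ℝ (⊤ : ℕ∞) c t := fun t ht =>
    ((hρ t ht).1).rpow_const_of_ne (ne_of_gt (hρ t ht).2.1)
  have hc_pos : ∀ t, |t| < ρ → 0 < c t := fun t ht =>
    Real.rpow_pos_of_pos (hρ t ht).2.1 _
  have h2k : ((2 * k : ℕ) : ℝ) ≠ 0 := by positivity
  have hc_pow : ∀ t, |t| < ρ → c t ^ (2 * k) = u t := by
    intro t ht
    have h0 : (0:ℝ) ≤ u t := le_of_lt (hρ t ht).2.1
    rw [hcdef]
    rw [← Real.rpow_natCast (u t ^ ((2 * k : ℝ))⁻¹) (2 * k), ← Real.rpow_mul h0]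
    rw [show ((2 * k : ℝ))⁻¹ * ((2 * k : ℕ) : ℝ) = 1 by
      push_cast; field_simp]
    exact Real.rpow_one _
  have hfid : ∀ t, |t| < ρ → f t = t ^ k * c t ^ (2 * k) := by
    intro t ht
    rw [hc_pow t ht]
    exact (hρ t ht).2.2
  -- the function σ
  set σ : ℝ → ℝ := fun t => t * c t ^ 2 with hσdef
  have hσ_cd : ∀ t, |t| < ρ → ContDiffAt ℝ (⊤ : ℕ∞) σ t := fun t ht =>
    contDiffAt_id.mul ((hc_cd t ht).pow 2)
  have hσ0 : σ 0 = 0 := by simp [hσdef]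
  set a : ℝ := c 0 ^ 2 with hadef
  have ha : (0:ℝ) < a := pow_pos (hc_pos 0 (by simpa using hρpos)) 2
  have hda : HasDerivAt σ a 0 := by
    have hd2 : DifferentiableAt ℝ (fun t => c t ^ 2) 0 :=
      ((hc_cd 0 (by simpa using hρpos)).differentiableAt (by simp)).pow 2
    have := (hasDerivAt_id' (0:ℝ)).fun_mul hd2.hasDerivAt
    exact (by simpa [hadef] using this : HasDerivAt (fun y : ℝ => y * c y ^ 2) a 0)
  -- fderiv as a continuous linear equiv
  have hfd_of : ∀ (t : ℝ) (b : ℝ) (hb : b ≠ 0), HasDerivAt σ b t →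
      HasFDerivAt σ ((ContinuousLinearEquiv.unitsEquivAut ℝ (Units.mk0 b hb) :
        ℝ ≃L[ℝ] ℝ) : ℝ →L[ℝ] ℝ) t := by
    intro t b hb hd
    have h1 : ((ContinuousLinearEquiv.unitsEquivAut ℝ (Units.mk0 b hb) :
        ℝ ≃L[ℝ] ℝ) : ℝ →L[ℝ] ℝ) = ContinuousLinearMap.smulRight (1 : ℝ →L[ℝ] ℝ) b := by
      ext
      simp [ContinuousLinearEquiv.unitsEquivAut, mul_comm]
    rw [h1]
    exact hd.hasFDerivAt
  have h0ρ : |(0:ℝ)| < ρ := by simpa using hρpos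
  -- the partial homeomorph from the inverse function theorem
  set e := ContDiffAt.toOpenPartialHomeomorph σ (hσ_cd 0 h0ρ)
      (hfd_of 0 a (ne_of_gt ha) hda) (by simp) with hedef
  have he_coe : ⇑e = σ := ContDiffAt.toOpenPartialHomeomorph_coe _ _ _
  have h0src : (0:ℝ) ∈ e.source := ContDiffAt.mem_toOpenPartialHomeomorph_source _ _ _
  have h0tgt : (0:ℝ) ∈ e.target := by
    have := ContDiffAt.image_mem_toOpenPartialHomeomorph_target (hσ_cd 0 h0ρ)
      (hfd_of 0 a (ne_of_gt ha) hda) (by simp)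
    rwa [hσ0] at this
  set τ : ℝ → ℝ := fun s => e.symm s with hτdef
  have hτ0 : τ 0 = 0 := by
    have := e.left_inv h0src
    rw [he_coe, hσ0] at this
    exact this
  -- deriv σ is nonvanishing near 0
  have hder0 : deriv σ 0 = a := hda.deriv
  obtain ⟨v, hv_mem, hv_cd⟩ := (⟨ball 0 ρ, ball_mem_nhds _ hρpos,
    fun t ht => (hσ_cd t (by simpa [Real.dist_eq] using ht)).contDiffWithinAt⟩ :
    ∃ v ∈ 𝓝 (0:ℝ), ContDiffOn ℝ (⊤ : ℕ∞) σ v)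
  have h0v : (0:ℝ) ∈ interior v := mem_interior_iff_mem_nhds.mpr hv_mem
  have hv'_cd : ContDiffOn ℝ (⊤ : ℕ∞) σ (interior v) := hv_cd.mono interior_subset
  have hderiv_cont : ContinuousOn (deriv σ) (interior v) :=
    (hv'_cd.deriv_of_isOpen (m := 0) isOpen_interior (by simp)).continuousOn
  have hderiv_at : ContinuousAt (deriv σ) 0 :=
    hderiv_cont.continuousAt (isOpen_interior.mem_nhds h0v)
  have hne_ev : ∀ᶠ t in 𝓝 (0:ℝ), deriv σ t ≠ 0 := hderiv_at.eventually_ne (by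
    rw [hder0]; exact ne_of_gt ha)
  -- radius ρ' : deriv σ ≠ 0, in e.source, and < ρ
  obtain ⟨ρ₂, hρ₂pos, hρ₂sub⟩ := Metric.mem_nhds_iff.mp
    (Filter.inter_mem hne_ev (e.open_source.mem_nhds h0src))
  set ρ' : ℝ := min ρ ρ₂ with hρ'def
  have hρ'pos : 0 < ρ' := lt_min hρpos hρ₂pos
  have hρ' : ∀ t, |t| < ρ' → |t| < ρ ∧ deriv σ t ≠ 0 ∧ t ∈ e.source := by
    intro t ht
    have h1 := hρ₂sub (mem_ball_zero_real (lt_of_lt_of_le ht (min_le_right _ _)))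
    exact ⟨lt_of_lt_of_le ht (min_le_left _ _), h1.1, h1.2⟩
  -- radius δ
  have hτcont : ContinuousAt τ 0 := e.symm.continuousAt (by simpa using h0tgt)
  have hT : e.target ∩ e.source ∩ τ ⁻¹' (ball 0 ρ') ∈ 𝓝 (0:ℝ) := by
    refine Filter.inter_mem (Filter.inter_mem (e.open_target.mem_nhds h0tgt)
      (e.open_source.mem_nhds h0src)) ?_
    have : ball (0:ℝ) ρ' ∈ 𝓝 (τ 0) := by
      rw [hτ0]; exact ball_mem_nhds _ hρ'pos
    exact hτcont.preimage_mem_nhds this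
  obtain ⟨δ₀, hδ₀pos, hδ₀sub⟩ := Metric.mem_nhds_iff.mp hT
  set δ : ℝ := min δ₀ ρ' with hδdef
  have hδpos : 0 < δ := lt_min hδ₀pos hρ'pos
  have hδρ : δ ≤ ρ := le_trans (min_le_right _ _) (min_le_left _ _)
  have hδ : ∀ s, |s| < δ → s ∈ e.target ∧ s ∈ e.source ∧ |τ s| < ρ' := by
    intro s hs
    have h1 := hδ₀sub (mem_ball_zero_real (lt_of_lt_of_le hs (min_le_left _ _)))
    refine ⟨h1.1.1, h1.1.2, ?_⟩
    have := h1.2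
    simpa [mem_ball, Real.dist_eq] using this
  -- smoothness of τ
  have hτ_cd : ∀ s, |s| < δ → ContDiffAt ℝ (⊤ : ℕ∞) τ s := by
    intro s hs
    have hst : s ∈ e.target := (hδ s hs).1
    have hts : |τ s| < ρ' := (hδ s hs).2.2
    have h1 := hρ' _ hts
    have hd : HasDerivAt σ (deriv σ (τ s)) (τ s) :=
      ((hσ_cd _ h1.1).differentiableAt (by simp)).hasDerivAt
    have := e.contDiffAt_symm (n := (⊤ : ℕ∞)) hst
      (by rw [he_coe]; exact hfd_of _ _ h1.2.1 hd)
      (by rw [he_coe]; exact hσ_cd _ h1.1)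
    exact this
  refine ⟨c, τ, ρ, δ, hδpos, hδρ, hc_cd, hc_pos, hfid, hτ_cd, hτ0, ?_, ?_, ?_⟩
  · intro s hs
    exact lt_of_lt_of_le (hδ s hs).2.2 (min_le_left _ _)
  · intro s hs
    have := e.right_inv (hδ s hs).1
    rw [he_coe] at this
    exact this
  · intro t ht
    have hsrc : t ∈ e.source := by
      have h1 := hδ₀sub (mem_ball_zero_real (lt_of_lt_of_le ht (min_le_left _ _)))
      exact h1.1.2
    have := e.left_inv hsrc
    rw [he_coe] at this
    exact this


private lemma norm_smul_sq {E : Type*} [NormedAddCommGroup E] [NormedSpace ℝ E]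
    (r : ℝ) (x : E) : ‖r • x‖ ^ 2 = r ^ 2 * ‖x‖ ^ 2 := by
  rw [norm_smul, mul_pow, Real.norm_eq_abs, sq_abs]

private lemma isOpen_aux {X : Type*} [TopologicalSpace X] {q : X → ℝ} {h : ℝ → ℝ} {δ : ℝ}
    (hq : Continuous q) (hq0 : ∀ x, 0 ≤ q x) (hh : ∀ s, |s| < δ → ContinuousAt h s) :
    IsOpen {x | q x < δ ∧ |h (q x)| < δ} := by
  have h1 : IsOpen {x | q x < δ} := isOpen_lt hq continuous_const
  have h2 : ContinuousOn (fun x => h (q x)) {x | q x < δ} := by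
    intro x hx
    exact ((hh (q x) (by rw [abs_of_nonneg (hq0 x)]; exact hx)).comp
      hq.continuousAt).continuousWithinAt
  have h3 := h2.isOpen_inter_preimage h1 isOpen_Ioo (t := Set.Ioo (-δ) δ)
  convert h3 using 1
  ext x
  simp only [Set.mem_setOf_eq, Set.mem_inter_iff, Set.mem_preimage, Set.mem_Ioo, abs_lt]

set_option maxHeartbeats 1000000 in
/-- Local normal form for `V_{f,g}`: if `f` vanishes to exact order `k` and `g` to exact
order `l` at `0` (with positive leading derivatives, `k ≥ l ≥ 1`), then there is a local
diffeomorphism `Φ` of neighborhoods of the origin of `ℝⁿ × ℝᵐ`, fixing the origin, carrying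
`{‖x‖^{2k} = ‖y‖^{2l}}` onto `{f(‖x‖²) = g(‖y‖²)}`. Hence near `0` the quasi-isometry class
of `V_{f,g}` depends only on `k` and `l`. -/
theorem local_model_of_V_fg
    (n m : ℕ) (hn : 0 < n) (hm : 0 < m)
    (k l : ℕ) (hl : 1 ≤ l) (hkl : l ≤ k)
    (f g : ℝ → ℝ) (hf : ContDiff ℝ (⊤ : ℕ∞) f) (hg : ContDiff ℝ (⊤ : ℕ∞) g)
    (hfvanish : ∀ j < k, iteratedDeriv j f 0 = 0) (hfpos : 0 < iteratedDeriv k f 0)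
    (hgvanish : ∀ j < l, iteratedDeriv j g 0 = 0) (hgpos : 0 < iteratedDeriv l g 0) :
    ∃ (U U' : Set (EuclideanSpace ℝ (Fin n) × EuclideanSpace ℝ (Fin m)))
      (Φ : EuclideanSpace ℝ (Fin n) × EuclideanSpace ℝ (Fin m) →
        EuclideanSpace ℝ (Fin n) × EuclideanSpace ℝ (Fin m)),
      IsOpen U ∧ IsOpen U' ∧
      (0 : EuclideanSpace ℝ (Fin n) × EuclideanSpace ℝ (Fin m)) ∈ U ∧
      (0 : EuclideanSpace ℝ (Fin n) × EuclideanSpace ℝ (Fin m)) ∈ U' ∧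
      Φ 0 = 0 ∧
      Set.BijOn Φ U U' ∧
      ContDiffOn ℝ (⊤ : ℕ∞) Φ U ∧
      (∃ Ψ : EuclideanSpace ℝ (Fin n) × EuclideanSpace ℝ (Fin m) →
          EuclideanSpace ℝ (Fin n) × EuclideanSpace ℝ (Fin m),
        ContDiffOn ℝ (⊤ : ℕ∞) Ψ U' ∧ (∀ w ∈ U, Ψ (Φ w) = w) ∧ ∀ w ∈ U', Φ (Ψ w) = w) ∧
      Φ '' {w ∈ U | ‖w.1‖ ^ (2 * k) = ‖w.2‖ ^ (2 * l)} =
        {w ∈ U' | f (‖w.1‖ ^ 2) = g (‖w.2‖ ^ 2)} := by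
  obtain ⟨c₁, τ₁, ρ₁, δ₁, hδpos₁, hδρ₁, hccd₁, hcpos₁, hfid₁, hτcd₁, hτ0₁, hτlt₁, hστ₁, hτσ₁⟩ :=
    oneDim k (le_trans hl hkl) f hf hfvanish hfpos
  obtain ⟨c₂, τ₂, ρ₂, δ₂, hδpos₂, hδρ₂, hccd₂, hcpos₂, hfid₂, hτcd₂, hτ0₂, hτlt₂, hστ₂, hτσ₂⟩ :=
    oneDim l hl g hg hgvanish hgpos
  set W := EuclideanSpace ℝ (Fin n) × EuclideanSpace ℝ (Fin m) with hWdef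
  set q₁ : W → ℝ := fun w => ‖w.1‖ ^ 2 with hq₁def
  set q₂ : W → ℝ := fun w => ‖w.2‖ ^ 2 with hq₂def
  have hq₁c : ContDiff ℝ (⊤ : ℕ∞) q₁ := (contDiff_norm_sq ℝ).comp contDiff_fst
  have hq₂c : ContDiff ℝ (⊤ : ℕ∞) q₂ := (contDiff_norm_sq ℝ).comp contDiff_snd
  have hq₁0 : ∀ w : W, 0 ≤ q₁ w := fun w => sq_nonneg _
  have hq₂0 : ∀ w : W, 0 ≤ q₂ w := fun w => sq_nonneg _
  set U : Set W := {w | (q₁ w < δ₁ ∧ |τ₁ (q₁ w)| < δ₁) ∧ (q₂ w < δ₂ ∧ |τ₂ (q₂ w)| < δ₂)}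
    with hUdef
  set U' : Set W := {w | (q₁ w < δ₁ ∧ |q₁ w * c₁ (q₁ w) ^ 2| < δ₁) ∧
      (q₂ w < δ₂ ∧ |q₂ w * c₂ (q₂ w) ^ 2| < δ₂)} with hU'def
  set Φ : W → W := fun w => ((c₁ (τ₁ (q₁ w)))⁻¹ • w.1, (c₂ (τ₂ (q₂ w)))⁻¹ • w.2) with hΦdef
  set Ψ : W → W := fun w => (c₁ (q₁ w) • w.1, c₂ (q₂ w) • w.2) with hΨdef
  -- abs versions of the bounds
  have habs₁ : ∀ w : W, q₁ w < δ₁ → |q₁ w| < δ₁ := fun w h => by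
    rwa [abs_of_nonneg (hq₁0 w)]
  have habs₂ : ∀ w : W, q₂ w < δ₂ → |q₂ w| < δ₂ := fun w h => by
    rwa [abs_of_nonneg (hq₂0 w)]
  -- radial computation for Φ
  have hq₁Φ : ∀ w : W, q₁ w < δ₁ → q₁ (Φ w) = τ₁ (q₁ w) := by
    intro w h
    have hi := hστ₁ (q₁ w) (habs₁ w h)
    have he : q₁ (Φ w) = (c₁ (τ₁ (q₁ w)))⁻¹ ^ 2 * q₁ w := by
      simp only [hΦdef, hq₁def, norm_smul_sq]
    set t := τ₁ (q₁ w) with ht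
    have hc : c₁ t ≠ 0 := ne_of_gt (hcpos₁ _ (hτlt₁ _ (habs₁ w h)))
    rw [he, ← hi]
    field_simp
  have hq₂Φ : ∀ w : W, q₂ w < δ₂ → q₂ (Φ w) = τ₂ (q₂ w) := by
    intro w h
    have hi := hστ₂ (q₂ w) (habs₂ w h)
    have he : q₂ (Φ w) = (c₂ (τ₂ (q₂ w)))⁻¹ ^ 2 * q₂ w := by
      simp only [hΦdef, hq₂def, norm_smul_sq]
    set t := τ₂ (q₂ w) with ht
    have hc : c₂ t ≠ 0 := ne_of_gt (hcpos₂ _ (hτlt₂ _ (habs₂ w h)))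
    rw [he, ← hi]
    field_simp
  -- radial computation for Ψ
  have hq₁Ψ : ∀ w : W, q₁ (Ψ w) = q₁ w * c₁ (q₁ w) ^ 2 := by
    intro w
    simp only [hΨdef, hq₁def, norm_smul_sq]
    ring
  have hq₂Ψ : ∀ w : W, q₂ (Ψ w) = q₂ w * c₂ (q₂ w) ^ 2 := by
    intro w
    simp only [hΨdef, hq₂def, norm_smul_sq]
    ring
  -- maps to
  have hmaps : ∀ w ∈ U, Φ w ∈ U' := by
    rintro w ⟨⟨h1, h2⟩, h3, h4⟩
    have e1 := hq₁Φ w h1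
    have e2 := hq₂Φ w h3
    refine ⟨⟨?_, ?_⟩, ?_, ?_⟩
    · rw [e1]; exact (abs_lt.mp h2).2
    · rw [e1, hστ₁ (q₁ w) (habs₁ w h1)]; exact habs₁ w h1
    · rw [e2]; exact (abs_lt.mp h4).2
    · rw [e2, hστ₂ (q₂ w) (habs₂ w h3)]; exact habs₂ w h3
  have hmaps' : ∀ w ∈ U', Ψ w ∈ U := by
    rintro w ⟨⟨h1, h2⟩, h3, h4⟩
    have e1 := hq₁Ψ w
    have e2 := hq₂Ψ w
    refine ⟨⟨?_, ?_⟩, ?_, ?_⟩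
    · rw [e1]; exact (abs_lt.mp h2).2
    · rw [e1, hτσ₁ (q₁ w) (habs₁ w h1)]; exact habs₁ w h1
    · rw [e2]; exact (abs_lt.mp h4).2
    · rw [e2, hτσ₂ (q₂ w) (habs₂ w h3)]; exact habs₂ w h3
  -- inverse identities
  have hinv1 : ∀ w ∈ U, Ψ (Φ w) = w := by
    rintro w ⟨⟨h1, h2⟩, h3, h4⟩
    have hc1 : c₁ (τ₁ (q₁ w)) ≠ 0 :=
      ne_of_gt (hcpos₁ _ (hτlt₁ _ (habs₁ w h1)))
    have hc2 : c₂ (τ₂ (q₂ w)) ≠ 0 :=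
      ne_of_gt (hcpos₂ _ (hτlt₂ _ (habs₂ w h3)))
    have e1 := hq₁Φ w h1
    have e2 := hq₂Φ w h3
    show (c₁ (q₁ (Φ w)) • (Φ w).1, c₂ (q₂ (Φ w)) • (Φ w).2) = w
    rw [e1, e2]
    show (c₁ (τ₁ (q₁ w)) • ((c₁ (τ₁ (q₁ w)))⁻¹ • w.1),
      c₂ (τ₂ (q₂ w)) • ((c₂ (τ₂ (q₂ w)))⁻¹ • w.2)) = w
    rw [smul_smul, smul_smul, mul_inv_cancel₀ hc1, mul_inv_cancel₀ hc2, one_smul, one_smul]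
  have hinv2 : ∀ w ∈ U', Φ (Ψ w) = w := by
    rintro w ⟨⟨h1, h2⟩, h3, h4⟩
    have hc1 : c₁ (q₁ w) ≠ 0 := ne_of_gt (hcpos₁ _ (lt_of_lt_of_le (habs₁ w h1) hδρ₁))
    have hc2 : c₂ (q₂ w) ≠ 0 := ne_of_gt (hcpos₂ _ (lt_of_lt_of_le (habs₂ w h3) hδρ₂))
    have ha1 : τ₁ (q₁ (Ψ w)) = q₁ w := by rw [hq₁Ψ w]; exact hτσ₁ _ (habs₁ w h1)
    have ha2 : τ₂ (q₂ (Ψ w)) = q₂ w := by rw [hq₂Ψ w]; exact hτσ₂ _ (habs₂ w h3)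
    show ((c₁ (τ₁ (q₁ (Ψ w))))⁻¹ • (Ψ w).1, (c₂ (τ₂ (q₂ (Ψ w))))⁻¹ • (Ψ w).2) = w
    rw [ha1, ha2]
    show ((c₁ (q₁ w))⁻¹ • (c₁ (q₁ w) • w.1), (c₂ (q₂ w))⁻¹ • (c₂ (q₂ w) • w.2)) = w
    rw [smul_smul, smul_smul, inv_mul_cancel₀ hc1, inv_mul_cancel₀ hc2, one_smul, one_smul]
  -- openness
  have hUopen : IsOpen U := by
    have e : U = {w : W | q₁ w < δ₁ ∧ |τ₁ (q₁ w)| < δ₁} ∩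
        {w : W | q₂ w < δ₂ ∧ |τ₂ (q₂ w)| < δ₂} := rfl
    rw [e]
    exact (isOpen_aux hq₁c.continuous hq₁0 (fun s hs => (hτcd₁ s hs).continuousAt)).inter
      (isOpen_aux hq₂c.continuous hq₂0 (fun s hs => (hτcd₂ s hs).continuousAt))
  have hU'open : IsOpen U' := by
    have e : U' = {w : W | q₁ w < δ₁ ∧ |(fun s => s * c₁ s ^ 2) (q₁ w)| < δ₁} ∩
        {w : W | q₂ w < δ₂ ∧ |(fun s => s * c₂ s ^ 2) (q₂ w)| < δ₂} := rfl
    rw [e]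
    refine (isOpen_aux (h := fun s => s * c₁ s ^ 2) hq₁c.continuous hq₁0
        (fun s hs => ?_)).inter
      (isOpen_aux (h := fun s => s * c₂ s ^ 2) hq₂c.continuous hq₂0 (fun s hs => ?_))
    · exact continuousAt_id.mul
        (((hccd₁ s (lt_of_lt_of_le hs hδρ₁)).continuousAt).pow 2)
    · exact continuousAt_id.mul
        (((hccd₂ s (lt_of_lt_of_le hs hδρ₂)).continuousAt).pow 2)
  -- zero membership
  have hq₁z : q₁ 0 = 0 := by simp [hq₁def]
  have hq₂z : q₂ 0 = 0 := by simp [hq₂def]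
  have h0U : (0 : W) ∈ U := by
    refine ⟨⟨?_, ?_⟩, ?_, ?_⟩ <;>
      simp [hq₁z, hq₂z, hτ0₁, hτ0₂, hδpos₁, hδpos₂, abs_of_nonneg]
  have h0U' : (0 : W) ∈ U' := by
    refine ⟨⟨?_, ?_⟩, ?_, ?_⟩ <;> simp [hq₁z, hq₂z, hδpos₁, hδpos₂]
  have hΦ0 : Φ 0 = 0 := by
    show ((c₁ (τ₁ (q₁ 0)))⁻¹ • (0 : W).1, (c₂ (τ₂ (q₂ 0)))⁻¹ • (0 : W).2) = 0
    simp
  -- smoothness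
  have hΦcd : ContDiffOn ℝ (⊤ : ℕ∞) Φ U := by
    rintro w ⟨⟨h1, h2⟩, h3, h4⟩
    apply ContDiffAt.contDiffWithinAt
    have ht1 : ContDiffAt ℝ (⊤ : ℕ∞) (fun w : W => τ₁ (q₁ w)) w :=
      (hτcd₁ _ (habs₁ w h1)).comp w hq₁c.contDiffAt
    have ht2 : ContDiffAt ℝ (⊤ : ℕ∞) (fun w : W => τ₂ (q₂ w)) w :=
      (hτcd₂ _ (habs₂ w h3)).comp w hq₂c.contDiffAt
    have hcc1 : ContDiffAt ℝ (⊤ : ℕ∞) (fun w : W => c₁ (τ₁ (q₁ w))) w :=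
      (hccd₁ _ (hτlt₁ _ (habs₁ w h1))).comp w ht1
    have hcc2 : ContDiffAt ℝ (⊤ : ℕ∞) (fun w : W => c₂ (τ₂ (q₂ w))) w :=
      (hccd₂ _ (hτlt₂ _ (habs₂ w h3))).comp w ht2
    have hne1 : c₁ (τ₁ (q₁ w)) ≠ 0 := ne_of_gt (hcpos₁ _ (hτlt₁ _ (habs₁ w h1)))
    have hne2 : c₂ (τ₂ (q₂ w)) ≠ 0 := ne_of_gt (hcpos₂ _ (hτlt₂ _ (habs₂ w h3)))
    exact ((hcc1.inv hne1).smul contDiffAt_fst).prodMk ((hcc2.inv hne2).smul contDiffAt_snd)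
  have hΨcd : ContDiffOn ℝ (⊤ : ℕ∞) Ψ U' := by
    rintro w ⟨⟨h1, h2⟩, h3, h4⟩
    apply ContDiffAt.contDiffWithinAt
    have hcc1 : ContDiffAt ℝ (⊤ : ℕ∞) (fun w : W => c₁ (q₁ w)) w :=
      (hccd₁ _ (lt_of_lt_of_le (habs₁ w h1) hδρ₁)).comp w hq₁c.contDiffAt
    have hcc2 : ContDiffAt ℝ (⊤ : ℕ∞) (fun w : W => c₂ (q₂ w)) w :=
      (hccd₂ _ (lt_of_lt_of_le (habs₂ w h3) hδρ₂)).comp w hq₂c.contDiffAt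
    exact (hcc1.smul contDiffAt_fst).prodMk (hcc2.smul contDiffAt_snd)
  -- the key pointwise equivalence
  have hiff : ∀ w ∈ U, (f (q₁ (Φ w)) = g (q₂ (Φ w)) ↔ q₁ w ^ k = q₂ w ^ l) := by
    rintro w ⟨⟨h1, h2⟩, h3, h4⟩
    rw [hq₁Φ w h1, hq₂Φ w h3]
    have hfv : f (τ₁ (q₁ w)) = q₁ w ^ k := by
      rw [hfid₁ _ (hτlt₁ _ (habs₁ w h1)), pow_mul, ← mul_pow, hστ₁ _ (habs₁ w h1)]
    have hgv : g (τ₂ (q₂ w)) = q₂ w ^ l := by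
      rw [hfid₂ _ (hτlt₂ _ (habs₂ w h3)), pow_mul, ← mul_pow, hστ₂ _ (habs₂ w h3)]
    rw [hfv, hgv]
  -- image equality
  have himg : Φ '' {w ∈ U | ‖w.1‖ ^ (2 * k) = ‖w.2‖ ^ (2 * l)} =
      {w ∈ U' | f (‖w.1‖ ^ 2) = g (‖w.2‖ ^ 2)} := by
    have hM : ∀ w : W, (‖w.1‖ ^ (2 * k) = ‖w.2‖ ^ (2 * l)) ↔ q₁ w ^ k = q₂ w ^ l := by
      intro w
      rw [pow_mul, pow_mul]
    ext w'
    simp only [Set.mem_image, Set.mem_setOf_eq]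
    constructor
    · rintro ⟨w, ⟨hwU, hMw⟩, rfl⟩
      refine ⟨hmaps w hwU, ?_⟩
      have := (hiff w hwU).mpr ((hM w).mp hMw)
      exact this
    · rintro ⟨hw'U', hN⟩
      refine ⟨Ψ w', ⟨hmaps' w' hw'U', ?_⟩, hinv2 w' hw'U'⟩
      rw [hM (Ψ w')]
      have h5 := hiff (Ψ w') (hmaps' w' hw'U')
      rw [hinv2 w' hw'U'] at h5
      exact h5.mp hN
  exact ⟨U, U', Φ, hUopen, hU'open, h0U, h0U', hΦ0,
    ⟨hmaps, fun a ha b hb hab => by rw [← hinv1 a ha, ← hinv1 b hb, hab],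
      fun w' hw' => ⟨Ψ w', hmaps' w' hw', hinv2 w' hw'⟩⟩,
    hΦcd, ⟨Ψ, hΨcd, hinv1, hinv2⟩, himg⟩
end

section
/- Let H₁ and H₂ be complex Hilbert spaces, and let T : H₁ ⇀ H₂ and S : H₂ ⇀ H₁ be densely defined unbounded linear operators that are formal adjoints of each other, i.e. ⟨T u, v⟩ = ⟨u, S v⟩ for all u ∈ dom T and v ∈ dom S. Then T is closable, its closure satisfies T̄ ⊆ S*, and the following are equivalent: (i) T̄ = S* (uniqueness of the ideal boundary condition, i.e. the minimal extension T_min = T̄ equals the maximal extension T_max = S*); (ii) for all u ∈ dom(S*) and all v ∈ dom(T*), one has ⟨S* u, v⟩ = ⟨u, T* v⟩. -/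
open scoped InnerProductSpace

set_option linter.unusedSectionVars false

namespace L2StokesAux

open LinearPMap

variable {E F : Type*}
    [NormedAddCommGroup E] [InnerProductSpace ℂ E] [CompleteSpace E]
    [NormedAddCommGroup F] [InnerProductSpace ℂ F] [CompleteSpace F]

/-- The adjoint of a densely defined operator is closed. -/
theorem adjoint_isClosed (A : E →ₗ.[ℂ] F) (hA : Dense (A.domain : Set E)) :
    A.adjoint.IsClosed := by
  have hset : (A.adjoint.graph : Set (F × E)) =
      ⋂ u : A.domain, {p : F × E | ⟪p.2, (u : E)⟫_ℂ = ⟪p.1, A u⟫_ℂ} := by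
    ext ⟨v, w⟩
    simp only [Set.mem_iInter, Set.mem_setOf_eq, SetLike.mem_coe, LinearPMap.mem_graph_iff]
    constructor
    · rintro ⟨⟨v', hv⟩, h1, h2⟩ u
      simp only at h1 h2
      subst h1
      rw [← h2]
      exact adjoint_isFormalAdjoint hA ⟨v', hv⟩ u
    · intro h
      have hv : v ∈ A.adjoint.domain :=
        mem_adjoint_domain_of_exists (T := A) v ⟨w, fun x => h x⟩
      exact ⟨⟨v, hv⟩, rfl, adjoint_apply_eq hA _ fun x => h x⟩
  show IsClosed (A.adjoint.graph : Set (F × E))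
  rw [hset]
  exact isClosed_iInter fun u => isClosed_eq
    ((continuous_snd.inner continuous_const)) ((continuous_fst.inner continuous_const))

/-- The adjoint is a formal adjoint of the closure. -/
theorem adjoint_inner_closure (A : E →ₗ.[ℂ] F) (hA : Dense (A.domain : Set E))
    (hcl : A.IsClosable) (v : A.adjoint.domain) (x : A.closure.domain) :
    ⟪A.adjoint v, (x : E)⟫_ℂ = ⟪(v : F), A.closure x⟫_ℂ := by
  have hK : IsClosed {p : E × F | ⟪(A.adjoint v : E), p.1⟫_ℂ = ⟪(v : F), p.2⟫_ℂ} :=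
    isClosed_eq (continuous_const.inner continuous_fst) (continuous_const.inner continuous_snd)
  have hsub : (A.graph : Set (E × F)) ⊆
      {p : E × F | ⟪(A.adjoint v : E), p.1⟫_ℂ = ⟪(v : F), p.2⟫_ℂ} := by
    rintro p hp
    rcases (LinearPMap.mem_graph_iff A).mp hp with ⟨u, h1, h2⟩
    simp only [Set.mem_setOf_eq, ← h1, ← h2]
    exact adjoint_isFormalAdjoint hA v u
  have hx : ((x : E), A.closure x) ∈ closure (A.graph : Set (E × F)) := by
    rw [← Submodule.topologicalClosure_coe, hcl.graph_closure_eq_closure_graph]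
    exact A.closure.mem_graph x
  exact closure_minimal hsub hK hx

/-- Key step (von Neumann): any pair orthogonal-dual to the adjoint lies in the graph of the
closure. -/
theorem mem_closure_graph (A : E →ₗ.[ℂ] F) (hA : Dense (A.domain : Set E))
    (hcl : A.IsClosable) {v : E} {w : F}
    (h : ∀ b : A.adjoint.domain, ⟪w, (b : F)⟫_ℂ = ⟪v, A.adjoint b⟫_ℂ) :
    (v, w) ∈ A.closure.graph := by
  set e : WithLp 2 (E × F) ≃L[ℂ] E × F := WithLp.prodContinuousLinearEquiv 2 ℂ E F with he
  set G : Submodule ℂ (WithLp 2 (E × F)) :=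
    A.graph.comap (e.toLinearEquiv : WithLp 2 (E × F) →ₗ[ℂ] E × F) with hGdef
  have hmemG : ∀ u : A.domain, e.symm ((u : E), A u) ∈ G := by
    intro u
    simp only [hGdef, Submodule.mem_comap]
    have : e (e.symm ((u : E), A u)) = ((u : E), A u) := e.apply_symm_apply _
    rw [LinearEquiv.coe_coe]
    show e.toLinearEquiv (e.symm ((u : E), A u)) ∈ A.graph
    rw [show (e.toLinearEquiv (e.symm ((u : E), A u)) : E × F) = ((u : E), A u) from this]
    exact A.mem_graph u
  have hmain : e.symm (v, w) ∈ Gᗮᗮ := by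
    rw [Submodule.mem_orthogonal]
    intro y hy
    -- components of y
    have hyab : ∀ u : A.domain, ⟪(u : E), (e y).1⟫_ℂ + ⟪A u, (e y).2⟫_ℂ = 0 := by
      intro u
      have h0 := hy _ (hmemG u)
      rw [WithLp.prod_inner_apply] at h0
      have h1 : ((e.symm ((u : E), A u)).ofLp.1 : E) = (u : E) := rfl
      have h2 : ((e.symm ((u : E), A u)).ofLp.2 : F) = A u := rfl
      rw [h1, h2] at h0
      exact h0
    have hconj : ∀ u : A.domain, ⟪-(e y).1, (u : E)⟫_ℂ = ⟪(e y).2, A u⟫_ℂ := by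
      intro u
      have hc : ⟪(e y).1, (u : E)⟫_ℂ + ⟪(e y).2, A u⟫_ℂ = 0 := by
        have := congrArg (starRingEnd ℂ) (hyab u)
        simpa [_root_.map_add, inner_conj_symm] using this
      rw [inner_neg_left]
      linear_combination -hc
    have hb : (e y).2 ∈ A.adjoint.domain :=
      mem_adjoint_domain_of_exists (T := A) _ ⟨-(e y).1, fun u => hconj u⟩
    have hAb : A.adjoint ⟨(e y).2, hb⟩ = -(e y).1 :=
      adjoint_apply_eq hA _ fun u => hconj u
    have hvw : ⟪v, (e y).1⟫_ℂ + ⟪w, (e y).2⟫_ℂ = 0 := by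
      have := h ⟨(e y).2, hb⟩
      rw [hAb] at this
      rw [this, inner_neg_right]
      ring
    rw [WithLp.prod_inner_apply]
    have h1 : ((e.symm (v, w)).ofLp.1 : E) = v := rfl
    have h2 : ((e.symm (v, w)).ofLp.2 : F) = w := rfl
    rw [h1, h2]
    have hy1 : (y.ofLp.1 : E) = (e y).1 := rfl
    have hy2 : (y.ofLp.2 : F) = (e y).2 := rfl
    rw [hy1, hy2]
    have := congrArg (starRingEnd ℂ) hvw
    simpa [_root_.map_add, inner_conj_symm] using this
  rw [Submodule.orthogonal_orthogonal_eq_closure] at hmain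
  have hGclos : (G.topologicalClosure : Set (WithLp 2 (E × F))) =
      e ⁻¹' closure (A.graph : Set (E × F)) := by
    rw [Submodule.topologicalClosure_coe]
    have hGset : (G : Set (WithLp 2 (E × F))) = e ⁻¹' (A.graph : Set (E × F)) := rfl
    rw [hGset]
    simp only [← ContinuousLinearEquiv.coe_toHomeomorph]
    exact (e.toHomeomorph.preimage_closure _).symm
  have := hmain
  rw [← SetLike.mem_coe, hGclos, Set.mem_preimage, e.apply_symm_apply] at this
  rw [← Submodule.topologicalClosure_coe, hcl.graph_closure_eq_closure_graph] at this
  exact this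

/-- If `A` is densely defined and closable, its adjoint is densely defined. -/
theorem dense_adjoint_domain (A : E →ₗ.[ℂ] F) (hA : Dense (A.domain : Set E))
    (hcl : A.IsClosable) : Dense (A.adjoint.domain : Set F) := by
  rw [Submodule.dense_iff_topologicalClosure_eq_top, Submodule.topologicalClosure_eq_top_iff]
  rw [Submodule.eq_bot_iff]
  intro v hv
  rw [Submodule.mem_orthogonal] at hv
  have h : ∀ b : A.adjoint.domain, ⟪v, (b : F)⟫_ℂ = ⟪(0 : E), A.adjoint b⟫_ℂ := by
    intro b
    rw [inner_zero_left, ← inner_conj_symm, hv _ b.2, _root_.map_zero]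
  have := mem_closure_graph A hA hcl h
  exact A.closure.graph_fst_eq_zero_snd this rfl

/-- The double adjoint is contained in the closure. -/
theorem adjoint_adjoint_le_closure (A : E →ₗ.[ℂ] F) (hA : Dense (A.domain : Set E))
    (hcl : A.IsClosable) : A.adjoint.adjoint ≤ A.closure := by
  apply le_of_le_graph
  intro p hp
  rcases (LinearPMap.mem_graph_iff _).mp hp with ⟨y, h1, h2⟩
  have hdense := dense_adjoint_domain A hA hcl
  have h : ∀ b : A.adjoint.domain, ⟪p.2, (b : F)⟫_ℂ = ⟪p.1, A.adjoint b⟫_ℂ := by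
    intro b
    rw [← h1, ← h2]
    exact adjoint_isFormalAdjoint hdense y b
  have := mem_closure_graph A hA hcl (v := p.1) (w := p.2) h
  simpa using this

/-- A closed operator equals its own closure. -/
theorem closure_eq_self {f : E →ₗ.[ℂ] F} (hf : f.IsClosed) : f.closure = f := by
  apply LinearPMap.eq_of_eq_graph
  rw [← hf.isClosable.graph_closure_eq_closure_graph]
  exact le_antisymm (Submodule.topologicalClosure_minimal _ le_rfl hf)
    f.graph.le_topologicalClosure

theorem apply_congr {f g : E →ₗ.[ℂ] F} (h : f = g) (x : f.domain) (y : g.domain)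
    (hxy : (x : E) = (y : E)) : f x = g y := by
  subst h
  congr
  exact Subtype.ext hxy

end L2StokesAux

open L2StokesAux LinearPMap in
/-- Abstract `L²`-Stokes theorem: if the densely defined operators `T` and `S` are formal
adjoints of each other, then `T` is closable, `T̄ ⊆ S*`, and `T_min = T̄` equals
`T_max = S*` if and only if `⟪S* u, v⟫ = ⟪u, T* v⟫` for all `u ∈ dom S*`, `v ∈ dom T*`. -/
theorem l2_stokes_abstract
    {H₁ H₂ : Type*}
    [NormedAddCommGroup H₁] [InnerProductSpace ℂ H₁] [CompleteSpace H₁]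
    [NormedAddCommGroup H₂] [InnerProductSpace ℂ H₂] [CompleteSpace H₂]
    (T : H₁ →ₗ.[ℂ] H₂) (S : H₂ →ₗ.[ℂ] H₁)
    (hT : Dense (T.domain : Set H₁)) (hS : Dense (S.domain : Set H₂))
    (hadj : ∀ (u : T.domain) (v : S.domain), ⟪T u, (v : H₂)⟫_ℂ = ⟪(u : H₁), S v⟫_ℂ) :
    T.IsClosable ∧ T.closure ≤ S.adjoint ∧
      (T.closure = S.adjoint ↔
        ∀ (u : S.adjoint.domain) (v : T.adjoint.domain),
          ⟪S.adjoint u, (v : H₂)⟫_ℂ = ⟪(u : H₁), T.adjoint v⟫_ℂ) := by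
  have hTS : T.IsFormalAdjoint S := hadj
  have hle : T ≤ S.adjoint := hTS.symm.le_adjoint hS
  have hSadjClosed : S.adjoint.IsClosed := adjoint_isClosed S hS
  have hclosable : T.IsClosable := hSadjClosed.isClosable.leIsClosable hle
  have hclle : T.closure ≤ S.adjoint := by
    have := hSadjClosed.isClosable.closure_mono hle
    rwa [closure_eq_self hSadjClosed] at this
  refine ⟨hclosable, hclle, ?_, ?_⟩
  · -- forward
    intro h u v
    have hu : (u : H₁) ∈ T.closure.domain := by rw [h]; exact u.2
    have h1 : T.closure ⟨(u : H₁), hu⟩ = S.adjoint u := apply_congr h _ _ rfl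
    rw [← h1]
    have h2 := adjoint_inner_closure T hT hclosable v ⟨(u : H₁), hu⟩
    calc ⟪T.closure ⟨(u : H₁), hu⟩, (v : H₂)⟫_ℂ
        = (starRingEnd ℂ) ⟪(v : H₂), T.closure ⟨(u : H₁), hu⟩⟫_ℂ := by rw [inner_conj_symm]
      _ = (starRingEnd ℂ) ⟪(T.adjoint v : H₁), ((u : H₁))⟫_ℂ := by rw [← h2]
      _ = ⟪(u : H₁), T.adjoint v⟫_ℂ := by rw [inner_conj_symm]
  · -- backward
    intro h
    have hdense : Dense (T.adjoint.domain : Set H₂) := dense_adjoint_domain T hT hclosable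
    have hfa : S.adjoint.IsFormalAdjoint T.adjoint := h
    have hle2 : S.adjoint ≤ T.adjoint.adjoint := hfa.symm.le_adjoint hdense
    exact le_antisymm hclle
      (hle2.trans (adjoint_adjoint_le_closure T hT hclosable))
end
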